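/- Define the flow polynomial value F_G(q) of a connected loopless multigraph G as the number of maps k : E(G) → 𝔽_q with k(e) ≠ 0 for all e satisfying Σ_{e} ε_{v,e}·k(e) = 0 for all v ∈ V(G). Then F_G(q) = q^{−|V(G)|} · Σ_{α : E(G) → 𝔽_q^*} Σ_{x : V(G) → 𝔽_q} χ₁( Σ_{e ∈ E(G)} α(e)·(x(i(e)) − x(f(e)))² ), where χ₁ is any nontrivial additive character of 𝔽_q. -/

import Mathlib

open Finset in
/-- `u` and `v` are connected by edges in `T` (for the multigraph with origin `i`, terminus `f`). -/
def Connects {V E : Type} (i f : E → V) (T : Finset E) (u v : V) : Prop :=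
  Relation.ReflTransGen
    (fun a b => ∃ e ∈ T, (i e = a ∧ f e = b) ∨ (i e = b ∧ f e = a)) u v

/-- `T` is (the edge set of) a spanning tree: connected and with `|V| - 1` edges. -/
def IsSpanningTree {V E : Type} [Fintype V] (i f : E → V) (T : Finset E) : Prop :=
  (∀ u v : V, Connects i f T u v) ∧ T.card + 1 = Fintype.card V

/-- The spanning-tree generating polynomial `s(α, G)`. -/
noncomputable def treeSum {V E R : Type} [Fintype V] [Fintype E] [DecidableEq E]
    [CommRing R] (i f : E → V) (α : E → R) : R :=
  ∑ T ∈ @Finset.filter _ (fun T => IsSpanningTree i f T) (Classical.decPred _) Finset.univ,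
    ∏ e ∈ T, α e

/-- The weighted Laplacian matrix of the multigraph. -/
def Lap {V E R : Type} [Fintype E] [DecidableEq V] [CommRing R]
    (i f : E → V) (α : E → R) : Matrix V V R := fun k j =>
  if k = j then ∑ e ∈ Finset.univ.filter (fun e => i e = k ∨ f e = k), α e
  else - ∑ e ∈ Finset.univ.filter (fun e => (i e = k ∧ f e = j) ∨ (i e = j ∧ f e = k)), α e

/-- The projection of a vertex of `G` to a vertex of the contracted graph `G/W`. -/
def proj {V : Type} [DecidableEq V] (W : Finset V) (v : V) : Option {v : V // v ∉ W} :=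
  if h : v ∈ W then none else some ⟨v, h⟩

/-- `s(α, G/W)`: the spanning-tree generating polynomial of the contraction of `W` in `G`
(the contracted graph has vertex set `Option {v // v ∉ W}`, with `none` the contracted vertex,
and its edges are the edges of `G` not internal to `W`). -/
noncomputable def sContr {V E R : Type} [Fintype V] [Fintype E] [DecidableEq V] [DecidableEq E]
    [CommRing R] (i f : E → V) (W : Finset V) (α : E → R) : R :=
  treeSum (fun e : {e : E // ¬(i e ∈ W ∧ f e ∈ W)} => proj W (i e.1))
    (fun e => proj W (f e.1)) (fun e => α e.1)

/-- The incidence sign `ε_{v,e}`, as an element of the coefficient ring. -/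
def eps {V E R : Type} [DecidableEq V] [CommRing R] (i f : E → V) (v : V) (e : E) : R :=
  if i e = v then -1 else if f e = v then 1 else 0

/-- The number of nowhere-zero `F`-flows on the multigraph. -/
noncomputable def flowCount {V E : Type} [Fintype E] [DecidableEq V]
    (F : Type) [Field F] (i f : E → V) : ℕ :=
  Nat.card {k : E → F // (∀ e, k e ≠ 0) ∧ ∀ v : V, ∑ e : E, eps i f v e * k e = 0}

/-- The quadratic Gaussian sum `g(q)` of the finite field `F` (w.r.t. the additive
character `χ`); the quadratic character vanishes at `0`, so we may sum over all of `F`. -/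
noncomputable def gSum (F : Type) [Field F] [Fintype F] [DecidableEq F]
    (χ : AddChar F ℂ) : ℂ :=
  ∑ x : F, ((quadraticChar F x : ℤ) : ℂ) * χ x

private lemma addChar_map_sum' {A M ι : Type*} [AddCommMonoid A] [CommMonoid M]
    (ψ : AddChar A M) (s : Finset ι) (g : ι → A) :
    ψ (∑ i ∈ s, g i) = ∏ i ∈ s, ψ (g i) := by
  induction s using Finset.cons_induction with
  | empty => simp
  | cons a s ha ih => rw [Finset.sum_cons, Finset.prod_cons, AddChar.map_add_eq_mul, ih]

private lemma sum_full' {F : Type} [Field F] [Fintype F] [DecidableEq F]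
    (χ₁ : AddChar F ℂ) (hχ : ∃ x : F, χ₁ x ≠ 1) (c : F) :
    ∑ t : F, χ₁ (t * c) = if c = 0 then (Fintype.card F : ℂ) else 0 := by
  split_ifs with h
  · simp [h, Finset.card_univ]
  · calc ∑ t : F, χ₁ (t * c) = ∑ s : F, χ₁ s :=
        Fintype.sum_bijective (· * c) (mulRight_bijective₀ c h) _ _ (fun t => rfl)
    _ = 0 := AddChar.sum_eq_zero_iff_ne_zero.mpr (AddChar.ne_zero_iff.mpr hχ)

private lemma sum_units' {F : Type} [Field F] [Fintype F] [DecidableEq F]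
    (χ₁ : AddChar F ℂ) (hχ : ∃ x : F, χ₁ x ≠ 1) (c : F) :
    ∑ α : Fˣ, χ₁ ((α : F) * c) = if c = 0 then ((Fintype.card F : ℂ) - 1) else -1 := by
  have h1 : ∑ α : Fˣ, χ₁ ((α : F) * c) = ∑ a ∈ Finset.univ.filter (· ≠ (0:F)), χ₁ (a * c) := by
    rw [Fintype.sum_equiv unitsEquivNeZero (fun α : Fˣ => χ₁ ((α : F) * c))
      (fun a : {a : F // a ≠ 0} => χ₁ ((a : F) * c)) (fun α => rfl)]
    exact (Finset.sum_subtype (Finset.univ.filter (· ≠ (0:F)))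
      (fun x => by simp) (fun a => χ₁ (a * c))).symm
  have h2 : ∑ t : F, χ₁ (t * c) = (∑ a ∈ Finset.univ.filter (· ≠ (0:F)), χ₁ (a * c)) + 1 := by
    rw [← Finset.sum_filter_add_sum_filter_not Finset.univ (· ≠ (0:F)) (fun t => χ₁ (t * c))]
    congr 1
    have : Finset.univ.filter (fun t : F => ¬ t ≠ 0) = {0} := by
      ext t; simp
    rw [show (Finset.univ.filter (fun t : F => ¬ t ≠ 0)) = {0} from this]
    simp
  have := sum_full' χ₁ hχ c
  rw [h2, h1.symm] at this
  split_ifs at this ⊢ with h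
  · linear_combination this
  · linear_combination this

private lemma eps_sum' {V E F : Type} [Fintype V] [DecidableEq V] [Field F]
    (i f : E → V) (e : E) (he : i e ≠ f e) (x : V → F) :
    ∑ v : V, x v * eps i f v e = x (f e) - x (i e) := by
  have : ∀ v : V, x v * eps i f v e =
      (if i e = v then -x v else 0) + (if f e = v then x v else 0) := by
    intro v
    unfold eps
    split_ifs with h1 h2 <;> simp_all
  simp only [this, Finset.sum_add_distrib, Finset.sum_ite_eq, Finset.mem_univ, if_true]
  ring

private lemma rhs_eq' {V E F : Type} [Fintype V] [Fintype E] [DecidableEq V] [DecidableEq E]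
    [Field F] [Fintype F] [DecidableEq F] (i f : E → V)
    (χ₁ : AddChar F ℂ) (hχ : ∃ x : F, χ₁ x ≠ 1) :
    ∑ α : E → Fˣ, ∑ x : V → F, χ₁ (∑ e : E, (α e : F) * (x (i e) - x (f e)) ^ 2)
      = ∑ x : V → F, ∏ e : E,
          (if x (i e) = x (f e) then ((Fintype.card F : ℂ) - 1) else -1) := by
  rw [Finset.sum_comm]
  refine Finset.sum_congr rfl fun x _ => ?_
  have h1 : ∀ α : E → Fˣ, χ₁ (∑ e : E, (α e : F) * (x (i e) - x (f e)) ^ 2)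
      = ∏ e : E, χ₁ ((α e : F) * (x (i e) - x (f e)) ^ 2) := fun α =>
    addChar_map_sum' χ₁ _ _
  simp only [h1]
  rw [← Fintype.prod_sum (fun e (a : Fˣ) => χ₁ ((a : F) * (x (i e) - x (f e)) ^ 2))]
  refine Finset.prod_congr rfl fun e _ => ?_
  rw [sum_units' χ₁ hχ]
  exact if_congr (by rw [pow_eq_zero_iff (by norm_num), sub_eq_zero]) rfl rfl

private lemma lhs_eq' {V E F : Type} [Fintype V] [Fintype E] [DecidableEq V] [DecidableEq E]
    [Field F] [Fintype F] [DecidableEq F] (i f : E → V) (hl : ∀ e : E, i e ≠ f e)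
    (χ₁ : AddChar F ℂ) (hχ : ∃ x : F, χ₁ x ≠ 1) :
    ((Fintype.card F : ℂ) ^ Fintype.card V) * (flowCount F i f : ℕ)
      = ∑ x : V → F, ∏ e : E,
          (if x (i e) = x (f e) then ((Fintype.card F : ℂ) - 1) else -1) := by
  classical
  set q : ℂ := (Fintype.card F : ℂ) with hq
  set P : (E → Fˣ) → Prop := fun g => ∀ v : V, ∑ e : E, eps i f v e * (g e : F) = 0 with hPdef
  -- flowCount equals the number of unit-valued flows
  have hcard : (flowCount F i f : ℂ) = ((Finset.univ.filter P).card : ℂ) := by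
    have he : {k : E → F // (∀ e, k e ≠ 0) ∧ ∀ v : V, ∑ e : E, eps i f v e * k e = 0}
        ≃ {g : E → Fˣ // P g} :=
      { toFun := fun k => ⟨fun e => Units.mk0 (k.1 e) (k.2.1 e), fun v => by
          simpa using k.2.2 v⟩
        invFun := fun g => ⟨fun e => (g.1 e : F), fun e => (g.1 e).ne_zero, g.2⟩
        left_inv := fun k => by ext e; rfl
        right_inv := fun g => by ext e; rfl }
    rw [flowCount, Nat.card_congr he, Nat.card_eq_fintype_card, Fintype.card_subtype]
  -- the double character sum
  have key1 : ∑ g : E → Fˣ, ∑ x : V → F,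
      χ₁ (∑ v : V, x v * (∑ e : E, eps i f v e * (g e : F)))
      = q ^ Fintype.card V * ((Finset.univ.filter P).card : ℂ) := by
    have hin : ∀ g : E → Fˣ, (∑ x : V → F,
        χ₁ (∑ v : V, x v * (∑ e : E, eps i f v e * (g e : F))))
        = if P g then q ^ Fintype.card V else 0 := by
      intro g
      set a : V → F := fun v => ∑ e : E, eps i f v e * (g e : F) with ha
      have : ∀ x : V → F, χ₁ (∑ v : V, x v * a v) = ∏ v : V, χ₁ (x v * a v) := fun x =>
        addChar_map_sum' χ₁ _ _
      change ∑ x : V → F, χ₁ (∑ v : V, x v * a v) = _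
      simp only [this]
      rw [← Fintype.prod_sum (fun v (t : F) => χ₁ (t * a v))]
      have : ∀ v : V, (∑ t : F, χ₁ (t * a v)) = if a v = 0 then q else 0 := fun v =>
        sum_full' χ₁ hχ (a v)
      simp only [this]
      by_cases hPg : P g
      · rw [if_pos hPg]
        have : ∀ v : V, (if a v = 0 then q else 0) = q := fun v => if_pos (hPg v)
        simp only [this, Finset.prod_const, Finset.card_univ]
      · rw [if_neg hPg]
        obtain ⟨v, hv⟩ := not_forall.mp hPg
        exact Finset.prod_eq_zero (Finset.mem_univ v) (if_neg hv)
    simp only [hin]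
    rw [Finset.sum_ite, Finset.sum_const, Finset.sum_const_zero, add_zero,
      nsmul_eq_mul, mul_comm]
  have key2 : ∑ g : E → Fˣ, ∑ x : V → F,
      χ₁ (∑ v : V, x v * (∑ e : E, eps i f v e * (g e : F)))
      = ∑ x : V → F, ∏ e : E, (if x (i e) = x (f e) then (q - 1) else -1) := by
    rw [Finset.sum_comm]
    refine Finset.sum_congr rfl fun x _ => ?_
    have hexp : ∀ g : E → Fˣ,
        ∑ v : V, x v * (∑ e : E, eps i f v e * (g e : F))
          = ∑ e : E, (g e : F) * (x (f e) - x (i e)) := by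
      intro g
      simp_rw [Finset.mul_sum]
      rw [Finset.sum_comm]
      refine Finset.sum_congr rfl fun e _ => ?_
      have : ∀ v : V, x v * (eps i f v e * (g e : F)) = (x v * eps i f v e) * (g e : F) :=
        fun v => by ring
      simp only [this]
      rw [← Finset.sum_mul, eps_sum' i f e (hl e) x, mul_comm]
    simp only [hexp]
    have h1 : ∀ g : E → Fˣ, χ₁ (∑ e : E, (g e : F) * (x (f e) - x (i e)))
        = ∏ e : E, χ₁ ((g e : F) * (x (f e) - x (i e))) := fun g =>
      addChar_map_sum' χ₁ _ _
    simp only [h1]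
    rw [← Fintype.prod_sum (fun e (a : Fˣ) => χ₁ ((a : F) * (x (f e) - x (i e))))]
    refine Finset.prod_congr rfl fun e _ => ?_
    rw [sum_units' χ₁ hχ]
    exact if_congr (by rw [sub_eq_zero, eq_comm]) rfl rfl
  rw [hcard, ← key1, key2]


/-- The Key lemma: the number of nowhere-zero `𝔽_q`-flows equals
`q^{-|V|} ∑_{α : E → 𝔽_q^*} ∑_{x : V → 𝔽_q} χ₁(∑_e α_e (x_{i(e)} - x_{f(e)})²)`. -/
theorem flowCount_eq_gaussian_double_sum {V E F : Type} [Fintype V] [Fintype E]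
    [DecidableEq V] [DecidableEq E] [Field F] [Fintype F] [DecidableEq F]
    (i f : E → V) (hl : ∀ e : E, i e ≠ f e)
    (hconn : ∀ u v : V, Connects i f Finset.univ u v)
    (χ₁ : AddChar F ℂ) (hχ : ∃ x : F, χ₁ x ≠ 1) :
    (flowCount F i f : ℂ) =
      ((Fintype.card F : ℂ) ^ Fintype.card V)⁻¹ *
        ∑ α : E → Fˣ, ∑ x : V → F,
          χ₁ (∑ e : E, (α e : F) * (x (i e) - x (f e)) ^ 2) := by
  have hq : ((Fintype.card F : ℂ) ^ Fintype.card V) ≠ 0 :=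
    pow_ne_zero _ (Nat.cast_ne_zero.mpr Fintype.card_ne_zero)
  rw [eq_inv_mul_iff_mul_eq₀ hq, rhs_eq' i f χ₁ hχ, ← lhs_eq' i f hl χ₁ hχ]
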